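/- (Helly selection with dissipation) Let D : ℝⁿ → [0,∞) satisfy c_D|a| ≤ D(a) ≤ C_D|a| and the triangle inequality. If z^k : [0,T] → ℝⁿ is a sequence with sup_k Diss_D(z^k, [0,T]) < ∞ and sup_k sup_t |z^k(t)| < ∞, then there exists a subsequence, a function z : [0,T] → ℝⁿ, and a nondecreasing φ : [0,T] → [0,∞) such that z^k(t) → z(t) for all t, Diss_D(z^k,[0,t]) → φ(t) for all t, and Diss_D(z,[s,t]) ≤ φ(t) − φ(s) for all 0 ≤ s ≤ t ≤ T. -/

import Mathlib

/-!
The running dissipations `v_k t = Diss_D(z^k, [0, t])` are nondecreasing and uniformly bounded,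
so Helly's theorem for monotone functions gives a subsequence along which they converge everywhere
on `[0, T]` to a nondecreasing `ψ`: extract on a countable dense set of times, take the left
envelope of the limits, and extract once more at its countably many discontinuities. By
superadditivity, `c_D ‖z^k t - z^k s‖ ≤ v_k t - v_k s`, so convergence of `z^k` on a dense set
propagates to every continuity point of `ψ`; again the discontinuities are handled by a last
extraction. Finally each partition sum of the limit `z` on `[s, t]` is a limit of partition sums of
the `z^k`, which are at most `v_k t - v_k s → ψ t - ψ s`.
-/

open scoped ENNReal

/-- The dissipation of `z` on `[s,t]`: supremum over finite partitions of `[s,t]`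
of the sums of `D` of the increments. -/
noncomputable def diss {Z : Type*} [NormedAddCommGroup Z] (D : Z → ℝ)
    (z : ℝ → Z) (s t : ℝ) : ℝ≥0∞ :=
  ⨆ N : ℕ, ⨆ u : {u : Fin (N + 1) → ℝ // Monotone u ∧ u 0 = s ∧ u (Fin.last N) = t},
    ENNReal.ofReal (∑ i : Fin N, D (z (u.1 i.succ) - z (u.1 i.castSucc)))

open Filter Topology Set

theorem lipschitzWith_of_subadditive {E : Type*} [SeminormedAddCommGroup E] {D : E → ℝ} {C : ℝ}
    (hup : ∀ a, D a ≤ C * ‖a‖) (hsub : ∀ a b, D (a + b) ≤ D a + D b) :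
    LipschitzWith (Real.toNNReal C) D :=
  LipschitzWith.of_le_add_mul' C fun x y => by
    simpa [dist_eq_norm] using (hsub y (x - y)).trans (add_le_add_right (hup (x - y)) _)

section ConcatPartition

variable {α : Type*} {N M : ℕ} {u : Fin (N + 1) → α} {w : Fin (M + 1) → α}

/-- The points of `u` followed by those of `w` after its first one, which should be the last
point of `u`. -/
def concatPartition (u : Fin (N + 1) → α) (w : Fin (M + 1) → α) : Fin (N + M + 1) → α :=
  fun i => if h : (i : ℕ) ≤ N then u ⟨i, Nat.lt_succ_of_le h⟩ else w ⟨(i : ℕ) - N, by omega⟩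

theorem concatPartition_of_le {i : Fin (N + M + 1)} (h : (i : ℕ) ≤ N) :
    concatPartition u w i = u ⟨i, Nat.lt_succ_of_le h⟩ :=
  dif_pos h

theorem concatPartition_of_ge (hl : u (Fin.last N) = w 0) {i : Fin (N + M + 1)}
    (h : N ≤ (i : ℕ)) : concatPartition u w i = w ⟨(i : ℕ) - N, by omega⟩ := by
  rcases h.eq_or_lt with h | h
  · rw [concatPartition_of_le h.ge]
    convert hl using 2 <;> ext <;> simp [← h]
  · exact dif_neg h.not_ge

theorem concatPartition_zero : concatPartition u w 0 = u 0 :=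
  concatPartition_of_le (Nat.zero_le N)

theorem concatPartition_last (hl : u (Fin.last N) = w 0) :
    concatPartition u w (Fin.last (N + M)) = w (Fin.last M) := by
  rw [concatPartition_of_ge hl (by simp)]
  congr
  simp

theorem concatPartition_castAdd_castSucc (i : Fin N) :
    concatPartition u w (Fin.castAdd M i).castSucc = u i.castSucc := by
  rw [concatPartition_of_le (by simp)]
  rfl

theorem concatPartition_castAdd_succ (i : Fin N) :
    concatPartition u w (Fin.castAdd M i).succ = u i.succ := by
  rw [concatPartition_of_le (by simp)]
  rfl

theorem concatPartition_natAdd_castSucc (hl : u (Fin.last N) = w 0) (i : Fin M) :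
    concatPartition u w (Fin.natAdd N i).castSucc = w i.castSucc := by
  rw [concatPartition_of_ge hl (by simp)]
  congr
  simp

theorem concatPartition_natAdd_succ (hl : u (Fin.last N) = w 0) (i : Fin M) :
    concatPartition u w (Fin.natAdd N i).succ = w i.succ := by
  rw [concatPartition_of_ge hl (by simp; omega)]
  congr 1
  ext
  simp
  omega

theorem Monotone.concatPartition [Preorder α] (hu : Monotone u) (hw : Monotone w)
    (hl : u (Fin.last N) = w 0) : Monotone (concatPartition u w) := by
  refine Fin.monotone_iff_le_succ.2 fun i => i.addCases (fun i => ?_) (fun i => ?_)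
  · rw [concatPartition_castAdd_castSucc, concatPartition_castAdd_succ]
    exact hu i.castSucc_le_succ
  · rw [concatPartition_natAdd_castSucc hl, concatPartition_natAdd_succ hl]
    exact hw i.castSucc_le_succ

end ConcatPartition

section Dissipation

variable {Z : Type*} [NormedAddCommGroup Z] (D : Z → ℝ) (z : ℝ → Z)

def incrementSum {N : ℕ} (u : Fin (N + 1) → ℝ) : ℝ :=
  ∑ i : Fin N, D (z (u i.succ) - z (u i.castSucc))

theorem incrementSum_concatPartition {N M : ℕ} {u : Fin (N + 1) → ℝ} {w : Fin (M + 1) → ℝ}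
    (hl : u (Fin.last N) = w 0) :
    incrementSum D z (concatPartition u w) = incrementSum D z u + incrementSum D z w := by
  simp only [incrementSum, Fin.sum_univ_add, concatPartition_castAdd_castSucc,
    concatPartition_castAdd_succ, concatPartition_natAdd_castSucc hl,
    concatPartition_natAdd_succ hl]

theorem diss_eq_iSup_sigma (s t : ℝ) : diss D z s t =
    ⨆ p : Σ N : ℕ, {u : Fin (N + 1) → ℝ // Monotone u ∧ u 0 = s ∧ u (Fin.last N) = t},
      ENNReal.ofReal (incrementSum D z p.2.1) := by
  rw [diss, iSup_sigma]
  rfl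

variable {D z} {s t r : ℝ}

theorem ofReal_incrementSum_le_diss {N : ℕ} {u : Fin (N + 1) → ℝ} (hu : Monotone u)
    (h0 : u 0 = s) (hN : u (Fin.last N) = t) :
    ENNReal.ofReal (incrementSum D z u) ≤ diss D z s t :=
  le_iSup₂_of_le (f := fun N (u : {u : Fin (N + 1) → ℝ // Monotone u ∧ u 0 = s ∧
    u (Fin.last N) = t}) => ENNReal.ofReal (incrementSum D z u.1)) N ⟨u, hu, h0, hN⟩ le_rfl

theorem diss_le_iff {c : ℝ≥0∞} : diss D z s t ≤ c ↔ ∀ (N : ℕ) (u : Fin (N + 1) → ℝ),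
    Monotone u → u 0 = s → u (Fin.last N) = t → ENNReal.ofReal (incrementSum D z u) ≤ c := by
  simp only [diss, iSup_le_iff, Subtype.forall, and_imp, incrementSum]

theorem monotone_vecCons_vecCons (h : s ≤ t) : Monotone ![s, t] :=
  Fin.monotone_iff_le_succ.2 fun i => by fin_cases i; simpa

theorem ofReal_apply_sub_le_diss (h : s ≤ t) :
    ENNReal.ofReal (D (z t - z s)) ≤ diss D z s t := by
  simpa [incrementSum] using
    ofReal_incrementSum_le_diss (D := D) (z := z) (monotone_vecCons_vecCons h) rfl rfl

theorem diss_add_diss_le (hD : ∀ a, 0 ≤ D a) (hst : s ≤ t) (htr : t ≤ r) :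
    diss D z s t + diss D z t r ≤ diss D z s r := by
  have hne (a b : ℝ) (hab : a ≤ b) :
      Nonempty (Σ N : ℕ, {u : Fin (N + 1) → ℝ // Monotone u ∧ u 0 = a ∧ u (Fin.last N) = b}) :=
    ⟨⟨1, ![a, b], monotone_vecCons_vecCons hab, rfl, rfl⟩⟩
  have := hne s t hst
  have := hne t r htr
  rw [diss_eq_iSup_sigma, diss_eq_iSup_sigma]
  refine ENNReal.iSup_add_iSup_le fun ⟨N, u, hu, hu0, huN⟩ ⟨M, w, hw, hw0, hwM⟩ => ?_
  have hl : u (Fin.last N) = w 0 := huN.trans hw0.symm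
  have hsum (N) (u : Fin (N + 1) → ℝ) : 0 ≤ incrementSum D z u :=
    Finset.sum_nonneg fun _ _ => hD _
  rw [← ENNReal.ofReal_add (hsum N u) (hsum M w), ← incrementSum_concatPartition D z hl]
  exact ofReal_incrementSum_le_diss (hu.concatPartition hw hl)
    (concatPartition_zero.trans hu0) ((concatPartition_last hl).trans hwM)

theorem diss_le_diss_of_le (hD : ∀ a, 0 ≤ D a) (hst : s ≤ t) (htr : t ≤ r) :
    diss D z s t ≤ diss D z s r :=
  le_self_add.trans (diss_add_diss_le hD hst htr)

theorem monotoneOn_toReal_diss (hD : ∀ a, 0 ≤ D a) (hfin : diss D z r s ≠ ∞) :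
    MonotoneOn (fun t => (diss D z r t).toReal) (Icc r s) :=
  fun _ hx _ hy hxy => ENNReal.toReal_mono
    (ne_top_of_le_ne_top hfin (diss_le_diss_of_le hD hy.1 hy.2)) (diss_le_diss_of_le hD hx.1 hxy)

theorem diss_le_ofReal_toReal_sub (hD : ∀ a, 0 ≤ D a) (hrs : r ≤ s) (hst : s ≤ t)
    (hfin : diss D z r t ≠ ∞) :
    diss D z s t ≤ ENNReal.ofReal ((diss D z r t).toReal - (diss D z r s).toReal) := by
  rw [ENNReal.ofReal_sub _ ENNReal.toReal_nonneg, ENNReal.ofReal_toReal hfin,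
    ENNReal.ofReal_toReal (ne_top_of_le_ne_top hfin (diss_le_diss_of_le hD hrs hst))]
  exact ENNReal.le_sub_of_add_le_left (ne_top_of_le_ne_top hfin (diss_le_diss_of_le hD hrs hst))
    (diss_add_diss_le hD hrs hst)

theorem apply_sub_le_toReal_diss_sub (hD : ∀ a, 0 ≤ D a) (hrs : r ≤ s) (hst : s ≤ t)
    (hfin : diss D z r t ≠ ∞) :
    D (z t - z s) ≤ (diss D z r t).toReal - (diss D z r s).toReal :=
  (ENNReal.ofReal_le_ofReal_iff (sub_nonneg.2 (monotoneOn_toReal_diss hD hfin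
    ⟨hrs, hst⟩ ⟨hrs.trans hst, le_rfl⟩ hst))).1
    ((ofReal_apply_sub_le_diss hst).trans (diss_le_ofReal_toReal_sub hD hrs hst hfin))

theorem diss_le_of_tendsto (hD : Continuous D) {zs : ℕ → ℝ → Z}
    (hz : ∀ x ∈ Icc s t, Tendsto (fun k => zs k x) atTop (𝓝 (z x)))
    {c : ℕ → ℝ} {L : ℝ} (hc : Tendsto c atTop (𝓝 L))
    (hle : ∀ k, diss D (zs k) s t ≤ ENNReal.ofReal (c k)) :
    diss D z s t ≤ ENNReal.ofReal L := by
  refine diss_le_iff.2 fun N u hu h0 hN => ?_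
  have hmem (i) : u i ∈ Icc s t := ⟨h0 ▸ hu (Fin.zero_le i), hN ▸ hu (Fin.le_last i)⟩
  have hsum : Tendsto (fun k => incrementSum D (zs k) u) atTop (𝓝 (incrementSum D z u)) :=
    tendsto_finsetSum _ fun i _ =>
      (hD.tendsto _).comp ((hz _ (hmem i.succ)).sub (hz _ (hmem i.castSucc)))
  exact le_of_tendsto_of_tendsto' (ENNReal.tendsto_ofReal hsum) (ENNReal.tendsto_ofReal hc)
    fun k => (ofReal_incrementSum_le_diss hu h0 hN).trans (hle k)

theorem dist_le_inv_mul_toReal_diss_sub {c : ℝ} (hc : 0 < c) (hlow : ∀ a, c * ‖a‖ ≤ D a)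
    (hrs : r ≤ s) (hst : s ≤ t) (hfin : diss D z r t ≠ ∞) :
    dist (z s) (z t) ≤ c⁻¹ * ((diss D z r t).toReal - (diss D z r s).toReal) := by
  have hD (a) : 0 ≤ D a := (mul_nonneg hc.le (norm_nonneg a)).trans (hlow a)
  rw [le_inv_mul_iff₀ hc, dist_comm, dist_eq_norm]
  exact (hlow _).trans (apply_sub_le_toReal_diss_sub hD hrs hst hfin)

end Dissipation

theorem exists_subseq_forall_tendsto {α X : Type*} [TopologicalSpace X]
    [TopologicalSpace.PseudoMetrizableSpace X] {K : Set X} (hK : IsCompact K) {S : Set α}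
    (hS : S.Countable) (f : ℕ → α → X) (hf : ∀ k, ∀ x ∈ S, f k x ∈ K) :
    ∃ φ : ℕ → ℕ, StrictMono φ ∧ ∀ x ∈ S, ∃ L, Tendsto (fun k => f (φ k) x) atTop (𝓝 L) := by
  have := hS.to_subtype
  obtain ⟨g, -, φ, hφ, hg⟩ := (isCompact_univ_pi fun _ : S => hK).isSeqCompact
    (x := fun k (x : S) => f k x) fun k => mem_univ_pi.2 fun x => hf k x x.2
  exact ⟨φ, hφ, fun x hx => ⟨g ⟨x, hx⟩, tendsto_pi_nhds.1 hg ⟨x, hx⟩⟩⟩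

theorem cauchySeq_of_forall_eventually_dist_lt {X : Type*} [PseudoMetricSpace X] {u : ℕ → X}
    (h : ∀ ε > 0, ∃ w : ℕ → X, CauchySeq w ∧ ∀ᶠ k in atTop, dist (u k) (w k) < ε) :
    CauchySeq u := by
  refine Metric.cauchySeq_iff.2 fun ε hε => ?_
  obtain ⟨w, hw, hclose⟩ := h (ε / 3) (by positivity)
  obtain ⟨N₁, hN₁⟩ := eventually_atTop.1 hclose
  obtain ⟨N₂, hN₂⟩ := Metric.cauchySeq_iff.1 hw (ε / 3) (by positivity)
  refine ⟨max N₁ N₂, fun m hm n hn => ?_⟩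
  calc dist (u m) (u n) ≤ dist (u m) (w m) + dist (w m) (w n) + dist (w n) (u n) :=
        dist_triangle4 _ _ _ _
    _ < ε / 3 + ε / 3 + ε / 3 := by
        gcongr
        · exact hN₁ m (le_of_max_le_left hm)
        · exact hN₂ m (le_of_max_le_right hm) n (le_of_max_le_right hn)
        · exact dist_comm (u n) (w n) ▸ hN₁ n (le_of_max_le_left hn)
    _ = ε := by ring

-- The endpoints make every point of `[a, b]` a limit of grid points from its right, and `a` a
-- grid point on its left.
def ratPoints (a b : ℝ) : Set ℝ := Icc a b ∩ insert a (insert b (range ((↑) : ℚ → ℝ)))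

theorem countable_ratPoints (a b : ℝ) : (ratPoints a b).Countable :=
  ((countable_range _).insert b |>.insert a).mono inter_subset_right

theorem left_mem_ratPoints {a b : ℝ} (h : a ≤ b) : a ∈ ratPoints a b :=
  ⟨left_mem_Icc.2 h, mem_insert a _⟩

theorem mem_closure_ratPoints_inter_Ici {a b t : ℝ} (ht : t ∈ Icc a b) :
    t ∈ closure (ratPoints a b ∩ Ici t) := by
  rcases ht.2.eq_or_lt with rfl | htb
  · exact subset_closure ⟨⟨ht, mem_insert_of_mem _ (mem_insert _ _)⟩, self_mem_Ici⟩
  have hsub : Ioo t b ∩ range ((↑) : ℚ → ℝ) ⊆ ratPoints a b ∩ Ici t :=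
    fun x ⟨hx, hxq⟩ => ⟨⟨⟨ht.1.trans hx.1.le, hx.2.le⟩,
      mem_insert_of_mem _ (mem_insert_of_mem _ hxq)⟩, hx.1.le⟩
  have hdense : closure (Ioo t b) ⊆ closure (Ioo t b ∩ range ((↑) : ℚ → ℝ)) :=
    closure_minimal (Rat.denseRange_cast.open_subset_closure_inter isOpen_Ioo) isClosed_closure
  exact closure_mono hsub (hdense (closure_Ioo htb.ne ▸ left_mem_Icc.2 htb.le))

noncomputable def leftEnvelope (A : ℝ → ℝ) (Q : Set ℝ) (x : ℝ) : ℝ := sSup (A '' (Q ∩ Iic x))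

theorem leftEnvelope_mono {A : ℝ → ℝ} {Q : Set ℝ} {x y : ℝ} (hbdd : BddAbove (A '' Q))
    (hx : (Q ∩ Iic x).Nonempty) (hxy : x ≤ y) : leftEnvelope A Q x ≤ leftEnvelope A Q y :=
  csSup_le_csSup (hbdd.mono (image_mono inter_subset_left)) (hx.image A)
    (image_mono (inter_subset_inter_right _ (Iic_subset_Iic.2 hxy)))

theorem tendsto_leftEnvelope {I Q : Set ℝ} {f : ℕ → ℝ → ℝ} {A : ℝ → ℝ} {t : ℝ}
    (hmono : ∀ k, MonotoneOn (f k) I) (hQI : Q ⊆ I)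
    (hA : ∀ q ∈ Q, Tendsto (fun k => f k q) atTop (𝓝 (A q))) (hbdd : BddAbove (A '' Q))
    (ht : t ∈ I) (hne : (Q ∩ Iic t).Nonempty) (hcont : ContinuousWithinAt (leftEnvelope A Q) I t)
    (hdense : t ∈ closure (Q ∩ Ici t)) :
    Tendsto (fun k => f k t) atTop (𝓝 (leftEnvelope A Q t)) := by
  -- The lower bound only uses the definition of the supremum; the upper one uses continuity
  -- from the right.
  refine tendsto_order.2 ⟨fun y hy => ?_, fun y hy => ?_⟩
  · obtain ⟨_, ⟨q, ⟨hqQ, hqt⟩, rfl⟩, hyq⟩ := exists_lt_of_lt_csSup (hne.image A) hy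
    filter_upwards [(hA q hqQ).eventually (lt_mem_nhds hyq)] with k hk
    exact hk.trans_le (hmono k (hQI hqQ) ht hqt)
  · have := mem_closure_iff_nhdsWithin_neBot.1 hdense
    have hev : ∀ᶠ x in 𝓝[Q ∩ Ici t] t, leftEnvelope A Q x < y :=
      nhdsWithin_mono _ (fun x hx => hQI hx.1) (hcont (Iio_mem_nhds hy))
    obtain ⟨q, hqy, hqQ, htq⟩ := (hev.and self_mem_nhdsWithin).exists
    have hAq : A q ≤ leftEnvelope A Q q :=
      le_csSup (hbdd.mono (image_mono inter_subset_left)) (mem_image_of_mem A ⟨hqQ, self_mem_Iic⟩)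
    filter_upwards [(hA q hqQ).eventually (gt_mem_nhds (hAq.trans_lt hqy))] with k hk
    exact (hmono k ht (hQI hqQ) htq).trans_lt hk

theorem exists_subseq_tendsto_of_monotoneOn {f : ℕ → ℝ → ℝ} {a b B : ℝ}
    (hmono : ∀ k, MonotoneOn (f k) (Icc a b)) (hbd : ∀ k, ∀ t ∈ Icc a b, ‖f k t‖ ≤ B) :
    ∃ φ : ℕ → ℕ, StrictMono φ ∧ ∃ ψ : ℝ → ℝ,
      ∀ t ∈ Icc a b, Tendsto (fun k => f (φ k) t) atTop (𝓝 (ψ t)) := by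
  have hball (k) : ∀ t ∈ Icc a b, f k t ∈ Metric.closedBall 0 B :=
    fun t ht => mem_closedBall_zero_iff.2 (hbd k t ht)
  have hQI : ratPoints a b ⊆ Icc a b := inter_subset_left
  obtain ⟨φ₁, hφ₁, hlim⟩ := exists_subseq_forall_tendsto (isCompact_closedBall 0 B)
    (countable_ratPoints a b) f fun k q hq => hball k q (hQI hq)
  set A : ℝ → ℝ := fun q => limUnder atTop fun k => f (φ₁ k) q
  have hA (q) (hq : q ∈ ratPoints a b) : Tendsto (fun k => f (φ₁ k) q) atTop (𝓝 (A q)) :=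
    tendsto_nhds_limUnder (hlim q hq)
  have hbdd : BddAbove (A '' ratPoints a b) := ⟨B, forall_mem_image.2 fun q hq =>
    le_of_tendsto' (hA q hq) fun k => (Real.le_norm_self _).trans (hbd _ q (hQI hq))⟩
  have hne (t) (ht : t ∈ Icc a b) : (ratPoints a b ∩ Iic t).Nonempty :=
    ⟨a, left_mem_ratPoints (ht.1.trans ht.2), ht.1⟩
  have hψ : MonotoneOn (leftEnvelope A (ratPoints a b)) (Icc a b) :=
    fun x hx _ _ hxy => leftEnvelope_mono hbdd (hne x hx) hxy
  obtain ⟨φ₂, hφ₂, hlim₂⟩ := exists_subseq_forall_tendsto (isCompact_closedBall 0 B)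
    hψ.countable_not_continuousWithinAt (fun k => f (φ₁ k)) fun k t ht => hball _ t ht.1
  refine ⟨φ₁ ∘ φ₂, hφ₁.comp hφ₂, fun t => limUnder atTop fun k => f (φ₁ (φ₂ k)) t,
    fun t ht => tendsto_nhds_limUnder ?_⟩
  by_cases hc : ContinuousWithinAt (leftEnvelope A (ratPoints a b)) (Icc a b) t
  · exact ⟨_, (tendsto_leftEnvelope (fun k => hmono (φ₁ k)) hQI hA hbdd ht (hne t ht) hc
      (mem_closure_ratPoints_inter_Ici ht)).comp hφ₂.tendsto_atTop⟩
  · exact hlim₂ t ⟨ht, hc⟩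

theorem exists_subseq_tendsto_of_dist_le {X : Type*} [PseudoMetricSpace X] {K : Set X}
    (hK : IsCompact K) {g : ℕ → ℝ → X} {f : ℕ → ℝ → ℝ} {ψ : ℝ → ℝ} {a b c : ℝ}
    (hf : ∀ t ∈ Icc a b, Tendsto (fun k => f k t) atTop (𝓝 (ψ t)))
    (hψ : MonotoneOn ψ (Icc a b)) (hgK : ∀ k, ∀ t ∈ Icc a b, g k t ∈ K)
    (hdist : ∀ k, ∀ s ∈ Icc a b, ∀ t ∈ Icc a b, s ≤ t →
      dist (g k s) (g k t) ≤ c * (f k t - f k s)) :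
    ∃ φ : ℕ → ℕ, StrictMono φ ∧ ∀ t ∈ Icc a b, ∃ L, Tendsto (fun k => g (φ k) t) atTop (𝓝 L) := by
  obtain ⟨φ, hφ, hlim⟩ := exists_subseq_forall_tendsto hK
    ((countable_ratPoints a b).union hψ.countable_not_continuousWithinAt) g
    fun k t ht => hgK k t (ht.elim (fun h => h.1) fun h => h.1)
  refine ⟨φ, hφ, fun t ht => ?_⟩
  by_cases hc : ContinuousWithinAt ψ (Icc a b) t
  swap
  · exact hlim t (Or.inr ⟨ht, hc⟩)
  suffices CauchySeq fun k => g (φ k) t by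
    obtain ⟨L, -, hL⟩ := cauchySeq_tendsto_of_isComplete hK.isComplete (fun k => hgK _ t ht) this
    exact ⟨L, hL⟩
  refine cauchySeq_of_forall_eventually_dist_lt fun ε hε => ?_
  have hψε : ∀ᶠ x in 𝓝[ratPoints a b ∩ Ici t] t, c * (ψ x - ψ t) < ε := by
    have : Tendsto (fun x => c * (ψ x - ψ t)) (𝓝[Icc a b] t) (𝓝 0) := by
      simpa using (hc.tendsto.sub_const (ψ t)).const_mul c
    exact nhdsWithin_mono _ (fun x hx => hx.1.1) (this (Iio_mem_nhds hε))
  have := mem_closure_iff_nhdsWithin_neBot.1 (mem_closure_ratPoints_inter_Ici ht)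
  obtain ⟨q, hqε, hqQ, htq⟩ := (hψε.and self_mem_nhdsWithin).exists
  obtain ⟨L, hL⟩ := hlim q (Or.inl hqQ)
  have hfq : Tendsto (fun k => c * (f (φ k) q - f (φ k) t)) atTop (𝓝 (c * (ψ q - ψ t))) :=
    (((hf q hqQ.1).sub (hf t ht)).const_mul c).comp hφ.tendsto_atTop
  refine ⟨fun k => g (φ k) q, hL.cauchySeq, ?_⟩
  filter_upwards [hfq.eventually (gt_mem_nhds hqε)] with k hk
  exact (hdist _ t ht q hqQ.1 htq).trans_lt hk

theorem stmt18_general {n : ℕ} (D : EuclideanSpace ℝ (Fin n) → ℝ)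
    (cD CD : ℝ) (hcD : 0 < cD)
    (hlow : ∀ a, cD * ‖a‖ ≤ D a) (hup : ∀ a, D a ≤ CD * ‖a‖)
    (hsub : ∀ a b, D (a + b) ≤ D a + D b)
    (T : ℝ)
    (z : ℕ → ℝ → EuclideanSpace ℝ (Fin n))
    (Mdiss Mnorm : ℝ)
    (hdiss : ∀ k, diss D (z k) 0 T ≤ ENNReal.ofReal Mdiss)
    (hbd : ∀ k, ∀ t ∈ Set.Icc 0 T, ‖z k t‖ ≤ Mnorm) :
    ∃ φ : ℕ → ℕ, StrictMono φ ∧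
    ∃ (zl : ℝ → EuclideanSpace ℝ (Fin n)) (ψ : ℝ → ℝ),
      MonotoneOn ψ (Set.Icc 0 T) ∧ (∀ t ∈ Set.Icc 0 T, 0 ≤ ψ t) ∧
      (∀ t ∈ Set.Icc 0 T,
        Filter.Tendsto (fun k => z (φ k) t) Filter.atTop (nhds (zl t))) ∧
      (∀ t ∈ Set.Icc 0 T,
        Filter.Tendsto (fun k => diss D (z (φ k)) 0 t) Filter.atTop
          (nhds (ENNReal.ofReal (ψ t)))) ∧
      (∀ s t : ℝ, 0 ≤ s → s ≤ t → t ≤ T → diss D zl s t ≤ ENNReal.ofReal (ψ t - ψ s)) := by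
  have hD0 (a) : 0 ≤ D a := (mul_nonneg hcD.le (norm_nonneg a)).trans (hlow a)
  have hfinT (k) : diss D (z k) 0 T ≠ ∞ := ne_top_of_le_ne_top ENNReal.ofReal_ne_top (hdiss k)
  have hfin (k) (t) (ht : t ∈ Icc 0 T) : diss D (z k) 0 t ≠ ∞ :=
    ne_top_of_le_ne_top (hfinT k) (diss_le_diss_of_le hD0 ht.1 ht.2)
  set v : ℕ → ℝ → ℝ := fun k t => (diss D (z k) 0 t).toReal
  have hvbd (k) (t) (ht : t ∈ Icc 0 T) : ‖v k t‖ ≤ (ENNReal.ofReal Mdiss).toReal := by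
    rw [Real.norm_of_nonneg ENNReal.toReal_nonneg]
    exact ENNReal.toReal_mono ENNReal.ofReal_ne_top
      ((diss_le_diss_of_le hD0 ht.1 ht.2).trans (hdiss k))
  have hzv (k) (s) (hs : s ∈ Icc 0 T) (t) (ht : t ∈ Icc 0 T) (hst : s ≤ t) :
      dist (z k s) (z k t) ≤ cD⁻¹ * (v k t - v k s) :=
    dist_le_inv_mul_toReal_diss_sub hcD hlow hs.1 hst (hfin k t ht)
  obtain ⟨φ₁, hφ₁, ψ, hψ⟩ := exists_subseq_tendsto_of_monotoneOn
    (fun k => monotoneOn_toReal_diss hD0 (hfinT k)) hvbd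
  have hψmono : MonotoneOn ψ (Icc 0 T) := fun s hs t ht hst =>
    le_of_tendsto_of_tendsto' (hψ s hs) (hψ t ht) fun k =>
      monotoneOn_toReal_diss hD0 (hfinT _) hs ht hst
  obtain ⟨φ₂, hφ₂, hz⟩ := exists_subseq_tendsto_of_dist_le (isCompact_closedBall 0 Mnorm) hψ
    hψmono (fun k t ht => mem_closedBall_zero_iff.2 (hbd _ t ht)) fun k => hzv (φ₁ k)
  have hψ₂ (t) (ht : t ∈ Icc 0 T) : Tendsto (fun k => v (φ₁ (φ₂ k)) t) atTop (𝓝 (ψ t)) :=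
    (hψ t ht).comp hφ₂.tendsto_atTop
  refine ⟨φ₁ ∘ φ₂, hφ₁.comp hφ₂, fun t => limUnder atTop fun k => z (φ₁ (φ₂ k)) t, ψ, hψmono,
    fun t ht => ge_of_tendsto' (hψ t ht) fun k => ENNReal.toReal_nonneg,
    fun t ht => tendsto_nhds_limUnder (hz t ht), fun t ht => ?_, fun s t hs hst htT => ?_⟩
  · exact (ENNReal.tendsto_ofReal (hψ₂ t ht)).congr fun k => ENNReal.ofReal_toReal (hfin _ t ht)
  · exact diss_le_of_tendsto (lipschitzWith_of_subadditive hup hsub).continuous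
      (fun x hx => tendsto_nhds_limUnder (hz x ⟨hs.trans hx.1, hx.2.trans htT⟩))
      ((hψ₂ t ⟨hs.trans hst, htT⟩).sub (hψ₂ s ⟨hs, hst.trans htT⟩))
      fun k => diss_le_ofReal_toReal_sub hD0 hs hst (hfin _ t ⟨hs.trans hst, htT⟩)

/-- Helly selection principle with dissipation. -/
theorem stmt18 {n : ℕ} (D : EuclideanSpace ℝ (Fin n) → ℝ)
    (cD CD : ℝ) (hcD : 0 < cD) (hCD : 0 < CD)
    (hlow : ∀ a, cD * ‖a‖ ≤ D a) (hup : ∀ a, D a ≤ CD * ‖a‖)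
    (hsub : ∀ a b, D (a + b) ≤ D a + D b)
    (T : ℝ) (hT : 0 < T)
    (z : ℕ → ℝ → EuclideanSpace ℝ (Fin n))
    (Mdiss Mnorm : ℝ)
    (hdiss : ∀ k, diss D (z k) 0 T ≤ ENNReal.ofReal Mdiss)
    (hbd : ∀ k, ∀ t ∈ Set.Icc 0 T, ‖z k t‖ ≤ Mnorm) :
    ∃ φ : ℕ → ℕ, StrictMono φ ∧
    ∃ (zl : ℝ → EuclideanSpace ℝ (Fin n)) (ψ : ℝ → ℝ),
      MonotoneOn ψ (Set.Icc 0 T) ∧ (∀ t ∈ Set.Icc 0 T, 0 ≤ ψ t) ∧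
      (∀ t ∈ Set.Icc 0 T,
        Filter.Tendsto (fun k => z (φ k) t) Filter.atTop (nhds (zl t))) ∧
      (∀ t ∈ Set.Icc 0 T,
        Filter.Tendsto (fun k => diss D (z (φ k)) 0 t) Filter.atTop
          (nhds (ENNReal.ofReal (ψ t)))) ∧
      (∀ s t : ℝ, 0 ≤ s → s ≤ t → t ≤ T → diss D zl s t ≤ ENNReal.ofReal (ψ t - ψ s)) :=
  stmt18_general D cD CD hcD hlow hup hsub T z Mdiss Mnorm hdiss hbd
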